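/- Let R be a subdirect product of finite algebras A and B, with prime intervals α ≺ β in Con(A) and γ ≺ δ in Con(B) that cannot be separated in either direction. Then for any (α,β)-minimal set U there is an idempotent unary polynomial f of R such that f(A) = U and f(B) is a (γ,δ)-minimal set. -/

import Mathlib

namespace UAlg

structure Sig where
  ι : Type
  arity : ι → ℕ

inductive Term (σ : Sig) (n : ℕ) : Type where
  | var : Fin n → Term σ n
  | app : (i : σ.ι) → (Fin (σ.arity i) → Term σ n) → Term σ n

def Str (σ : Sig) (A : Type) : Type := ∀ i : σ.ι, (Fin (σ.arity i) → A) → A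

variable {σ : Sig} {A B : Type}

def Term.eval {n : ℕ} (S : Str σ A) : Term σ n → (Fin n → A) → A
  | .var j, x => x j
  | .app i ts, x => S i fun k => Term.eval S (ts k) x

/-- A subuniverse: a subset closed under all basic operations. -/
def Subuniv (S : Str σ A) (X : Set A) : Prop :=
  ∀ (i : σ.ι) (x : Fin (σ.arity i) → A), (∀ k, x k ∈ X) → S i x ∈ X

/-- Subalgebra generated by a set. -/
def Sg (S : Str σ A) (X : Set A) : Set A :=
  {a | ∀ Y : Set A, Subuniv S Y → X ⊆ Y → a ∈ Y}

def prodStr (S : Str σ A) (T : Str σ B) : Str σ (A × B) :=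
  fun i x => (S i (fun k => (x k).1), T i (fun k => (x k).2))

structure IsCongruence (S : Str σ A) (r : A → A → Prop) : Prop where
  refl : ∀ a, r a a
  symm : ∀ a b, r a b → r b a
  trans : ∀ a b c, r a b → r b c → r a c
  compat : ∀ (i : σ.ι) (x y : Fin (σ.arity i) → A),
    (∀ k, r (x k) (y k)) → r (S i x) (S i y)

/-- A tolerance: reflexive, symmetric, compatible binary relation. -/
def IsTolerance (S : Str σ A) (r : A → A → Prop) : Prop :=
  (∀ a, r a a) ∧ (∀ a b, r a b → r b a) ∧
    ∀ (i : σ.ι) (x y : Fin (σ.arity i) → A),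
      (∀ k, r (x k) (y k)) → r (S i x) (S i y)

/-- Unary polynomial: a term operation with parameters. -/
def IsUnaryPoly (S : Str σ A) (f : A → A) : Prop :=
  ∃ (n : ℕ) (t : Term σ (n + 1)) (c : Fin n → A),
    f = fun x => t.eval S (Fin.cons x c)

def IsBinPoly (S : Str σ A) (f : A → A → A) : Prop :=
  ∃ (n : ℕ) (t : Term σ (n + 2)) (c : Fin n → A),
    f = fun x y => t.eval S (Fin.cons x (Fin.cons y c))

def IsPolyOp (S : Str σ A) (n : ℕ) (f : (Fin n → A) → A) : Prop :=
  ∃ (m : ℕ) (t : Term σ (n + m)) (c : Fin m → A),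
    f = fun x => t.eval S (Fin.append x c)

def IsTermOp2 (S : Str σ A) (f : A → A → A) : Prop :=
  ∃ t : Term σ 2, f = fun x y => t.eval S (Fin.cons x (Fin.cons y (fun i => i.elim0)))

def IsTermOp3 (S : Str σ A) (f : A → A → A → A) : Prop :=
  ∃ t : Term σ 3,
    f = fun x y z => t.eval S (Fin.cons x (Fin.cons y (Fin.cons z (fun i => i.elim0))))

/-- `f` collapses `β` into `α`. -/
def Collapses (f : A → A) (β α : A → A → Prop) : Prop :=
  ∀ x y, β x y → α (f x) (f y)

def CongLE (r s : A → A → Prop) : Prop := ∀ x y, r x y → s x y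

/-- `β` covers `α` in the congruence lattice. -/
def Prec (S : Str σ A) (α β : A → A → Prop) : Prop :=
  CongLE α β ∧ α ≠ β ∧
    ∀ γ, IsCongruence S γ → CongLE α γ → CongLE γ β → γ = α ∨ γ = β

def MinSetWitness (S : Str σ A) (α β : A → A → Prop) (U : Set A) : Prop :=
  ∃ f, IsUnaryPoly S f ∧ ¬ Collapses f β α ∧ Set.range f = U

/-- An (α,β)-minimal set. -/
def MinSet (S : Str σ A) (α β : A → A → Prop) (U : Set A) : Prop :=
  MinSetWitness S α β U ∧ ∀ V, MinSetWitness S α β V → V ⊆ U → V = U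

/-- Term condition C(θ,β;α) (with polynomials). -/
def TC (S : Str σ A) (θ β α : A → A → Prop) : Prop :=
  ∀ (n : ℕ) (f : (Fin (n + 1) → A) → A), IsPolyOp S (n + 1) f →
    ∀ a b (u v : Fin n → A), θ a b → (∀ i, β (u i) (v i)) →
      (α (f (Fin.cons a u)) (f (Fin.cons a v)) ↔ α (f (Fin.cons b u)) (f (Fin.cons b v)))

/-- Strong term condition. -/
def STC (S : Str σ A) (θ β α : A → A → Prop) : Prop :=
  ∀ (n : ℕ) (f : (Fin (n + 1) → A) → A), IsPolyOp S (n + 1) f →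
    ∀ a b c (u v : Fin n → A), θ a b → θ a c → (∀ i, β (u i) (v i)) →
      α (f (Fin.cons a u)) (f (Fin.cons b v)) → α (f (Fin.cons c u)) (f (Fin.cons c v))

/-- An (α,β)-trace: intersection of a minimal set with a β-block on which β ≠ α. -/
def IsTrace (S : Str σ A) (α β : A → A → Prop) (N : Set A) : Prop :=
  ∃ U, MinSet S α β U ∧ ∃ a ∈ U, N = {x | x ∈ U ∧ β x a} ∧
    ∃ x ∈ N, ∃ y ∈ N, ¬ α x y

def TwoClasses (α : A → A → Prop) (N : Set A) (o e : A) : Prop :=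
  o ∈ N ∧ e ∈ N ∧ ¬ α o e ∧ ∀ x ∈ N, α x o ∨ α x e

def MeetOn (S : Str σ A) (α : A → A → Prop) (N : Set A) (o e : A) : Prop :=
  ∃ p, IsBinPoly S p ∧ (∀ x ∈ N, ∀ y ∈ N, p x y ∈ N) ∧
    ∀ x ∈ N, ∀ y ∈ N,
      (α x e → α y e → α (p x y) e) ∧ ((α x o ∨ α y o) → α (p x y) o)

def JoinOn (S : Str σ A) (α : A → A → Prop) (N : Set A) (o e : A) : Prop :=
  ∃ p, IsBinPoly S p ∧ (∀ x ∈ N, ∀ y ∈ N, p x y ∈ N) ∧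
    ∀ x ∈ N, ∀ y ∈ N,
      ((α x e ∨ α y e) → α (p x y) e) ∧ (α x o → α y o → α (p x y) o)

def NegOn (S : Str σ A) (α : A → A → Prop) (N : Set A) (o e : A) : Prop :=
  ∃ f, IsUnaryPoly S f ∧ (∀ x ∈ N, f x ∈ N) ∧
    ∀ x ∈ N, (α x e → α (f x) o) ∧ (α x o → α (f x) e)

def Typ3 (S : Str σ A) (α β : A → A → Prop) : Prop :=
  ¬ TC S β β α ∧ ∀ N, IsTrace S α β N →
    ∃ o e, TwoClasses α N o e ∧ MeetOn S α N o e ∧ JoinOn S α N o e ∧ NegOn S α N o e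

def Typ4 (S : Str σ A) (α β : A → A → Prop) : Prop :=
  ¬ TC S β β α ∧ (∀ N, IsTrace S α β N →
    ∃ o e, TwoClasses α N o e ∧ MeetOn S α N o e ∧ JoinOn S α N o e) ∧ ¬ Typ3 S α β

def Typ5 (S : Str σ A) (α β : A → A → Prop) : Prop :=
  ¬ TC S β β α ∧ (∀ N, IsTrace S α β N →
    ∃ o e, TwoClasses α N o e ∧ MeetOn S α N o e) ∧ ¬ Typ3 S α β ∧ ¬ Typ4 S α β

/-- Tame-congruence-theoretic type of the prime interval (α,β). -/
def TypIs (S : Str σ A) (α β : A → A → Prop) (k : ℕ) : Prop :=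
  match k with
  | 1 => STC S β β α
  | 2 => TC S β β α ∧ ¬ STC S β β α
  | 3 => Typ3 S α β
  | 4 => Typ4 S α β
  | 5 => Typ5 S α β
  | _ => False

/-- θ centralizes β modulo α (via binary polynomials). -/
def Centralizes (S : Str σ A) (θ β α : A → A → Prop) : Prop :=
  ∀ f, IsBinPoly S f → ∀ a b c d, θ a b → β c d →
    (α (f a c) (f a d) ↔ α (f b c) (f b d))

/-- ζ is the centralizer (α:β): the largest congruence centralizing β modulo α. -/
def IsCentralizer (S : Str σ A) (α β ζ : A → A → Prop) : Prop :=
  IsCongruence S ζ ∧ Centralizes S ζ β α ∧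
    ∀ θ, IsCongruence S θ → Centralizes S θ β α → CongLE θ ζ

/-- The quasi-centralizer relation ζ(α,β). -/
def QuasiCent (S : Str σ A) (α β : A → A → Prop) (a b : A) : Prop :=
  ∀ g, IsBinPoly S g →
    (Collapses (fun y => g a y) β α ↔ Collapses (fun y => g b y) β α)

def SubdirectProd (S : Str σ A) (T : Str σ B) (R : Set (A × B)) : Prop :=
  Subuniv (prodStr S T) R ∧ (∀ a, ∃ b, (a, b) ∈ R) ∧ (∀ b, ∃ a, (a, b) ∈ R)

/-- (f,g) are the coordinate actions of a single unary polynomial of R. -/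
def IsPolyPair (S : Str σ A) (T : Str σ B) (R : Set (A × B)) (f : A → A) (g : B → B) : Prop :=
  ∃ (n : ℕ) (t : Term σ (n + 1)) (c : Fin n → A × B), (∀ k, c k ∈ R) ∧
    (f = fun x => t.eval S (Fin.cons x (fun k => (c k).1))) ∧
    (g = fun y => t.eval T (Fin.cons y (fun k => (c k).2)))

def SeparatesPair (S : Str σ A) (T : Str σ B) (R : Set (A × B))
    (α β : A → A → Prop) (γ δ : B → B → Prop) : Prop :=
  ∃ f g, IsPolyPair S T R f g ∧ ¬ Collapses f β α ∧ Collapses g δ γ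

def SeparatesPairRev (S : Str σ A) (T : Str σ B) (R : Set (A × B))
    (γ δ : B → B → Prop) (α β : A → A → Prop) : Prop :=
  ∃ f g, IsPolyPair S T R f g ∧ ¬ Collapses g δ γ ∧ Collapses f β α

/-- Separation of prime intervals within a single algebra. -/
def SeparatesIn (S : Str σ A) (α β γ δ : A → A → Prop) : Prop :=
  ∃ f, IsUnaryPoly S f ∧ ¬ Collapses f β α ∧ Collapses f δ γ

def tolFst (R : Set (A × B)) : A → A → Prop := fun a b => ∃ c, (a, c) ∈ R ∧ (b, c) ∈ R
def tolSnd (R : Set (A × B)) : B → B → Prop := fun a b => ∃ c, (c, a) ∈ R ∧ (c, b) ∈ R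

/-- Q_ab: the subalgebra of A² generated by the diagonal together with (a,b). -/
def Qab (S : Str σ A) (a b : A) : Set (A × A) :=
  Sg (prodStr S S) ({p : A × A | p.1 = p.2} ∪ {(a, b)})

/-- Principal congruence generated by (a,b). -/
def CgPair (S : Str σ A) (a b : A) : A → A → Prop :=
  fun x y => ∀ r, IsCongruence S r → r a b → r x y

def CongSup (S : Str σ A) (r s : A → A → Prop) : A → A → Prop :=
  fun x y => ∀ t, IsCongruence S t → CongLE r t → CongLE s t → t x y

def RelInf (r s : A → A → Prop) : A → A → Prop := fun x y => r x y ∧ s x y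

def Perspective (S : Str σ A) (α β γ δ : A → A → Prop) : Prop :=
  (β = CongSup S α δ ∧ γ = RelInf α δ) ∨ (δ = CongSup S β γ ∧ α = RelInf β γ)

/-- Thin semilattice edge modulo θ. -/
def ThinSL (S : Str σ A) (θ : A → A → Prop) (a b : A) : Prop :=
  ∃ f, IsTermOp2 S f ∧ θ (f a b) b ∧ θ (f b a) b

/-- Thin majority edge modulo θ. -/
def ThinMajE (S : Str σ A) (θ : A → A → Prop) (a b : A) : Prop :=
  ∃ g, IsTermOp3 S g ∧ θ (g a a b) a ∧ θ (g a b a) a ∧ θ (g b a a) a ∧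
    θ (g a b b) b ∧ θ (g b a b) b ∧ θ (g b b a) b

/-- Thin affine edge modulo θ. -/
def ThinAff (S : Str σ A) (θ : A → A → Prop) (a b : A) : Prop :=
  ∃ h, IsTermOp3 S h ∧ θ (h b a a) b ∧ θ (h a a b) b

def ThinEdge (S : Str σ A) (θ : A → A → Prop) (a b : A) : Prop :=
  ThinSL S θ a b ∨ ThinMajE S θ a b ∨ ThinAff S θ a b

def ThinAS (S : Str σ A) (θ : A → A → Prop) (a b : A) : Prop :=
  ThinSL S θ a b ∨ ThinAff S θ a b

def classOf (r : A → A → Prop) (a : A) : Set A := {x | r x a}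

def IdemStr (S : Str σ A) : Prop := ∀ (i : σ.ι) (a : A), S i (fun _ => a) = a

def OmitsType1 (S : Str σ A) : Prop :=
  ∀ α β : A → A → Prop, IsCongruence S α → IsCongruence S β → Prec S α β →
    ¬ TypIs S α β 1

def ReachASIn (S : Str σ A) (B : Set A) : A → A → Prop :=
  Relation.ReflTransGen (fun x y => x ∈ B ∧ y ∈ B ∧ ThinAS S (· = ·) x y)

/-- D is a maximal strongly connected component of the semilattice+affine digraph on B. -/
def IsASComponent (S : Str σ A) (B D : Set A) : Prop :=
  D.Nonempty ∧ D ⊆ B ∧ (∀ x ∈ D, ∀ y ∈ D, ReachASIn S B x y) ∧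
    ∀ x ∈ D, ∀ y ∈ B, ReachASIn S B x y → y ∈ D

def Reach (S : Str σ A) : A → A → Prop :=
  Relation.ReflTransGen (ThinEdge S (· = ·))

/-- u-maximal element of A. -/
def UMax (S : Str σ A) (a : A) : Prop := ∀ b, Reach S a b → Reach S b a

def ReachIn (S : Str σ A) (B : Set A) : A → A → Prop :=
  Relation.ReflTransGen (fun x y => x ∈ B ∧ y ∈ B ∧ ThinEdge S (· = ·) x y)

/-- u-maximal element of the subalgebra B. -/
def UMaxIn (S : Str σ A) (B : Set A) (b : A) : Prop :=
  b ∈ B ∧ ∀ c ∈ B, ReachIn S B b c → ReachIn S B c b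

def ReachMod (S : Str σ A) (θ : A → A → Prop) : A → A → Prop :=
  Relation.ReflTransGen (fun x y => θ x y ∨ ThinEdge S θ x y)

/-- The θ-block of a is u-maximal in A/θ. -/
def UMaxMod (S : Str σ A) (θ : A → A → Prop) (a : A) : Prop :=
  ∀ b, ReachMod S θ a b → ReachMod S θ b a

def CongOn (S : Str σ A) (B : Set A) (r : A → A → Prop) : Prop :=
  (∀ a ∈ B, r a a) ∧ (∀ a b, r a b → r b a) ∧ (∀ a b c, r a b → r b c → r a c) ∧
    ∀ (i : σ.ι) (x y : Fin (σ.arity i) → A), (∀ k, x k ∈ B) → (∀ k, y k ∈ B) →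
      (∀ k, r (x k) (y k)) → r (S i x) (S i y)

def MaximalCongOn (S : Str σ A) (B : Set A) (r : A → A → Prop) : Prop :=
  CongOn S B r ∧ (∃ a ∈ B, ∃ b ∈ B, ¬ r a b) ∧
    ∀ r', CongOn S B r' → (∀ x y, x ∈ B → y ∈ B → r x y → r' x y) →
      ((∀ x y, x ∈ B → y ∈ B → (r' x y ↔ r x y)) ∨ ∀ x ∈ B, ∀ y ∈ B, r' x y)

/-- Semilattice edge (thick). -/
def SLEdge (S : Str σ A) (a b : A) : Prop :=
  ∃ θ, MaximalCongOn S (Sg S {a, b}) θ ∧ ¬ θ a b ∧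
    ∃ f, IsTermOp2 S f ∧ θ (f a b) b ∧ θ (f b a) b ∧ θ (f a a) a ∧ θ (f b b) b

/-- Majority edge (thick). -/
def MajEdge (S : Str σ A) (a b : A) : Prop :=
  ∃ θ, MaximalCongOn S (Sg S {a, b}) θ ∧ ¬ θ a b ∧
    ∃ g, IsTermOp3 S g ∧ θ (g a a b) a ∧ θ (g a b a) a ∧ θ (g b a a) a ∧
      θ (g a b b) b ∧ θ (g b a b) b ∧ θ (g b b a) b

def famStr {n : ℕ} {𝔸 : Fin n → Type} (S : ∀ i, Str σ (𝔸 i)) : Str σ (∀ i, 𝔸 i) :=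
  fun op x i => S i op (fun k => x k i)

def SubdirectFam {n : ℕ} {𝔸 : Fin n → Type} (S : ∀ i, Str σ (𝔸 i))
    (R : Set (∀ i, 𝔸 i)) : Prop :=
  Subuniv (famStr S) R ∧ ∀ (i : Fin n) (a : 𝔸 i), ∃ r ∈ R, r i = a

/-- f is the family of coordinate actions of a single unary polynomial of R. -/
def IsPolyFam {n : ℕ} {𝔸 : Fin n → Type} (S : ∀ i, Str σ (𝔸 i)) (R : Set (∀ i, 𝔸 i))
    (f : ∀ i, 𝔸 i → 𝔸 i) : Prop :=
  ∃ (m : ℕ) (t : Term σ (m + 1)) (c : Fin m → ∀ i, 𝔸 i), (∀ k, c k ∈ R) ∧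
    ∀ i, f i = fun x => t.eval (S i) (Fin.cons x (fun k => c k i))

/-- (α_i,β_i) can be separated from (α_j,β_j) by a unary polynomial of R. -/
def SeparatesFam {n : ℕ} {𝔸 : Fin n → Type} (S : ∀ i, Str σ (𝔸 i)) (R : Set (∀ i, 𝔸 i))
    (i j : Fin n) (αi βi : 𝔸 i → 𝔸 i → Prop) (αj βj : 𝔸 j → 𝔸 j → Prop) : Prop :=
  ∃ f, IsPolyFam S R f ∧ ¬ Collapses (f i) βi αi ∧ Collapses (f j) βj αj

end UAlg

/-!
Among the polynomial pairs `(f, g)` of `R` whose first coordinate maps into `U` without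
collapsing `β` into `α`, take one with `g(B)` as small as possible. Inseparability means a
pair collapses in one coordinate exactly when it collapses in the other, and primeness of
`α ≺ β` lets any two non-collapsing polynomials `f`, `h` be joined to a non-collapsing
`f ∘ p ∘ h`. Sandwiching a `(γ,δ)`-witness inside `g(B)` in this way shows `g(B)` is
`(γ,δ)`-minimal; sandwiching `f` with itself yields a pair that maps `f(A)` onto itself and
`g(B)` onto itself, and a suitable power of it is the required idempotent.
-/

theorem exists_isIdempotentElem_pow {M : Type*} [Monoid M] [Finite M] (x : M) :
    ∃ n ≠ 0, IsIdempotentElem (x ^ n) := by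
  obtain ⟨a, b, hab, hx⟩ : ∃ a b, a < b ∧ x ^ (a + 1) = x ^ (b + 1) := by
    obtain ⟨a, b, hne, h⟩ := Finite.exists_ne_map_eq_of_infinite fun n : ℕ => x ^ (n + 1)
    rcases hne.lt_or_gt with hlt | hlt
    exacts [⟨a, b, hlt, h⟩, ⟨b, a, hlt, h.symm⟩]
  have hperiodic : ∀ k n, a + 1 ≤ n → x ^ (n + k * (b - a)) = x ^ n := by
    intro k
    induction k with
    | zero => simp
    | succ k ih =>
      intro n hn
      calc x ^ (n + (k + 1) * (b - a))
        _ = x ^ (n - (a + 1)) * x ^ (b + 1) * x ^ (k * (b - a)) := by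
            rw [← pow_add, ← pow_add]; congr 1; rw [add_mul, one_mul]; omega
        _ = x ^ (n + k * (b - a)) := by
            rw [← hx, ← pow_add, ← pow_add]; congr 1; omega
        _ = x ^ n := ih n hn
  refine ⟨(a + 1) * (b - a), Nat.mul_ne_zero (by omega) (by omega), ?_⟩
  rw [IsIdempotentElem, ← pow_add]
  exact hperiodic (a + 1) _ (Nat.le_mul_of_pos_right _ (by omega))

theorem Function.range_iterate_succ_of_range_comp {X : Type*} {φ f : X → X}
    (hsub : Set.range φ ⊆ Set.range f) (h : Set.range (φ ∘ f) = Set.range f) (n : ℕ) :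
    Set.range φ^[n + 1] = Set.range f := by
  induction n with
  | zero => exact hsub.antisymm (h ▸ Set.range_comp_subset_range f φ)
  | succ n ih => rw [Function.iterate_succ', Set.range_comp, ih, ← Set.range_comp, h]

namespace UAlg

variable {σ : Sig} {A B : Type}

def Term.subst {m n : ℕ} (e : Fin m → Term σ n) : Term σ m → Term σ n
  | .var j => e j
  | .app i ts => .app i fun k => Term.subst e (ts k)

theorem Term.eval_subst {m n : ℕ} (S : Str σ A) (e : Fin m → Term σ n) (t : Term σ m)
    (x : Fin n → A) : (t.subst e).eval S x = t.eval S fun j => (e j).eval S x := by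
  induction t with
  | var j => rfl
  | app i ts ih => simp only [Term.subst, Term.eval, ih]

-- The term of `x ↦ t (t' x c') c`; its parameters are `c'` followed by `c`.
def Term.comp {n n' : ℕ} (t : Term σ (n + 1)) (t' : Term σ (n' + 1)) : Term σ (n' + n + 1) :=
  t.subst (Fin.cons
    (t'.subst (Fin.cons (.var 0) fun j => .var (Fin.castAdd n j).succ))
    fun j => .var (Fin.natAdd n' j).succ)

theorem Term.eval_comp {n n' : ℕ} (S : Str σ A) (t : Term σ (n + 1)) (t' : Term σ (n' + 1))
    (c : Fin n → A) (c' : Fin n' → A) (x : A) :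
    (t.comp t').eval S (Fin.cons x (Fin.append c' c)) =
      t.eval S (Fin.cons (t'.eval S (Fin.cons x c')) c) := by
  rw [Term.comp, Term.eval_subst]
  congr 1
  funext j
  refine Fin.cases ?_ (fun i => ?_) j
  · rw [Fin.cons_zero, Fin.cons_zero, Term.eval_subst]
    congr 1
    funext j'
    refine Fin.cases ?_ (fun i => ?_) j' <;> simp [Term.eval]
  · simp [Term.eval]

theorem Term.eval_rel {S : Str σ A} {r : A → A → Prop} (hr : IsCongruence S r) {n : ℕ}
    (t : Term σ n) {u v : Fin n → A} (h : ∀ j, r (u j) (v j)) :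
    r (t.eval S u) (t.eval S v) := by
  induction t with
  | var j => exact h j
  | app i ts ih => exact hr.compat i _ _ ih

theorem IsUnaryPoly.id (S : Str σ A) : IsUnaryPoly S fun x => x :=
  ⟨0, .var 0, Fin.elim0, rfl⟩

theorem IsUnaryPoly.comp {S : Str σ A} {f p : A → A} (hf : IsUnaryPoly S f)
    (hp : IsUnaryPoly S p) : IsUnaryPoly S fun x => f (p x) := by
  obtain ⟨n, t, c, rfl⟩ := hf
  obtain ⟨n', t', c', rfl⟩ := hp
  exact ⟨n' + n, t.comp t', Fin.append c' c,
    funext fun x => (Term.eval_comp S t t' c c' x).symm⟩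

theorem IsUnaryPoly.update (S : Str σ A) (i : σ.ι) (j : Fin (σ.arity i))
    (v : Fin (σ.arity i) → A) : IsUnaryPoly S fun x => S i (Function.update v j x) := by
  classical
  refine ⟨σ.arity i, .app i fun k => if k = j then .var 0 else .var k.succ, v, ?_⟩
  funext x
  simp only [Term.eval]
  congr 1
  funext k
  by_cases hk : k = j
  · subst hk; simp [Term.eval]
  · simp [hk, Term.eval]

theorem IsUnaryPoly.map_rel {S : Str σ A} {r : A → A → Prop} (hr : IsCongruence S r)
    {f : A → A} (hf : IsUnaryPoly S f) {x y : A} (h : r x y) : r (f x) (f y) := by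
  obtain ⟨n, t, c, rfl⟩ := hf
  exact Term.eval_rel hr t fun j => Fin.cases h (fun i => hr.refl (c i)) j

theorem rel_apply_of_rel_apply_update {ρ : A → A → Prop} (hrefl : ∀ a, ρ a a)
    (htrans : ∀ a b c, ρ a b → ρ b c → ρ a c) :
    ∀ {n : ℕ} (F : (Fin n → A) → A),
      (∀ v j a b, ρ a b → ρ (F (Function.update v j a)) (F (Function.update v j b))) →
      ∀ x y, (∀ k, ρ (x k) (y k)) → ρ (F x) (F y)
  | 0, F, _, x, y, _ => by rw [Subsingleton.elim x y]; exact hrefl _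
  | n + 1, F, hF, x, y, hxy => by
    have hhead : ρ (F x) (F (Fin.cons (y 0) (Fin.tail x))) := by
      have hupd : Function.update x 0 (y 0) = Fin.cons (y 0) (Fin.tail x) := by
        conv_lhs => rw [← Fin.cons_self_tail x]
        exact Fin.update_cons_zero _ _ _
      simpa [hupd] using hF x 0 (x 0) (y 0) (hxy 0)
    have htail := rel_apply_of_rel_apply_update hrefl htrans (fun v => F (Fin.cons (y 0) v))
      (fun v j a b h => by
        simpa only [Fin.cons_update] using hF (Fin.cons (y 0) v) j.succ a b h)
      (Fin.tail x) (Fin.tail y) (fun k => hxy k.succ)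
    rw [Fin.cons_self_tail] at htail
    exact htrans _ _ _ hhead htail

theorem isCongruence_of_forall_isUnaryPoly {S : Str σ A} {ρ : A → A → Prop}
    (hrefl : ∀ a, ρ a a) (hsymm : ∀ a b, ρ a b → ρ b a)
    (htrans : ∀ a b c, ρ a b → ρ b c → ρ a c)
    (hpoly : ∀ p, IsUnaryPoly S p → ∀ x y, ρ x y → ρ (p x) (p y)) : IsCongruence S ρ :=
  ⟨hrefl, hsymm, htrans, fun i => rel_apply_of_rel_apply_update hrefl htrans (S i)
    fun v j _ _ => hpoly _ (IsUnaryPoly.update S i j v) _ _⟩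

/-- The pairs that no polynomial followed by `f` separates modulo `α` form a congruence
between `α` and `β`; primeness forces it to be `α` once `f` does not collapse `β`. -/
theorem exists_isUnaryPoly_not_rel_of_prec {S : Str σ A} {α β : A → A → Prop}
    (hα : IsCongruence S α) (hβ : IsCongruence S β) (hab : Prec S α β) {f : A → A}
    (hf : IsUnaryPoly S f) (hnc : ¬ Collapses f β α) {x y : A} (hβxy : β x y)
    (hαxy : ¬ α x y) : ∃ p, IsUnaryPoly S p ∧ ¬ α (f (p x)) (f (p y)) := by
  let θ : A → A → Prop := fun x y => β x y ∧ ∀ p, IsUnaryPoly S p → α (f (p x)) (f (p y))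
  have hθ : IsCongruence S θ := isCongruence_of_forall_isUnaryPoly
    (fun a => ⟨hβ.refl a, fun _ _ => hα.refl _⟩)
    (fun a b h => ⟨hβ.symm a b h.1, fun p hp => hα.symm _ _ (h.2 p hp)⟩)
    (fun a b c h h' =>
      ⟨hβ.trans a b c h.1 h'.1, fun p hp => hα.trans _ _ _ (h.2 p hp) (h'.2 p hp)⟩)
    (fun q hq a b h => ⟨hq.map_rel hβ h.1, fun p hp => h.2 _ (hp.comp hq)⟩)
  have hαθ : CongLE α θ := fun a b h =>
    ⟨hab.1 a b h, fun p hp => hf.map_rel hα (hp.map_rel hα h)⟩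
  have hθα : θ = α := (hab.2.2 θ hθ hαθ fun _ _ h => h.1).resolve_right fun hθβ => hnc
    fun a b h => ((hθβ ▸ h : θ a b).2 _ (IsUnaryPoly.id S))
  by_contra! hall
  have hθxy : θ x y := ⟨hβxy, hall⟩
  exact hαxy (hθα ▸ hθxy)

section PolyPair

variable {S : Str σ A} {T : Str σ B} {R : Set (A × B)}

theorem IsPolyPair.fst {f : A → A} {g : B → B} (h : IsPolyPair S T R f g) :
    IsUnaryPoly S f := by
  obtain ⟨n, t, c, -, hf, -⟩ := h
  exact ⟨n, t, fun k => (c k).1, hf⟩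

theorem IsPolyPair.snd {f : A → A} {g : B → B} (h : IsPolyPair S T R f g) :
    IsUnaryPoly T g := by
  obtain ⟨n, t, c, -, -, hg⟩ := h
  exact ⟨n, t, fun k => (c k).2, hg⟩

theorem IsPolyPair.id : IsPolyPair S T R (fun x => x) (fun y => y) :=
  ⟨0, .var 0, Fin.elim0, fun k => k.elim0, rfl, rfl⟩

theorem IsPolyPair.comp {f f' : A → A} {g g' : B → B} (h : IsPolyPair S T R f g)
    (h' : IsPolyPair S T R f' g') :
    IsPolyPair S T R (fun x => f (f' x)) (fun y => g (g' y)) := by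
  obtain ⟨n, t, c, hc, rfl, rfl⟩ := h
  obtain ⟨n', t', c', hc', rfl, rfl⟩ := h'
  have happend {X : Type} (π : A × B → X) :
      (fun k => π (Fin.append c' c k)) =
        Fin.append (fun k => π (c' k)) (fun k => π (c k)) := by
    funext k
    refine Fin.addCases (fun i => ?_) (fun i => ?_) k <;> simp
  refine ⟨n' + n, t.comp t', Fin.append c' c, fun k => ?_, ?_, ?_⟩
  · refine Fin.addCases (fun i => ?_) (fun i => ?_) k <;> simp [hc, hc']
  · funext x; rw [happend Prod.fst, Term.eval_comp]
  · funext y; rw [happend Prod.snd, Term.eval_comp]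

theorem IsPolyPair.iterate {f : A → A} {g : B → B} (h : IsPolyPair S T R f g) (n : ℕ) :
    IsPolyPair S T R f^[n] g^[n] := by
  induction n with
  | zero => exact IsPolyPair.id
  | succ n ih => simpa only [Function.iterate_succ', Function.comp_def] using h.comp ih

theorem SubdirectProd.exists_isPolyPair_of_fst (hR : SubdirectProd S T R) {f : A → A}
    (hf : IsUnaryPoly S f) : ∃ g, IsPolyPair S T R f g := by
  obtain ⟨n, t, c, rfl⟩ := hf
  choose b hb using fun k => hR.2.1 (c k)
  exact ⟨_, n, t, fun k => (c k, b k), hb, rfl, rfl⟩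

theorem SubdirectProd.exists_isPolyPair_of_snd (hR : SubdirectProd S T R) {g : B → B}
    (hg : IsUnaryPoly T g) : ∃ f, IsPolyPair S T R f g := by
  obtain ⟨n, t, c, rfl⟩ := hg
  choose a ha using fun k => hR.2.2 (c k)
  exact ⟨_, n, t, fun k => (a k, c k), ha, rfl, rfl⟩

theorem SubdirectProd.exists_isPolyPair_not_collapses_comp (hR : SubdirectProd S T R)
    {α β : A → A → Prop} (hα : IsCongruence S α) (hβ : IsCongruence S β) (hab : Prec S α β)
    {f h : A → A} (hf : IsUnaryPoly S f) (hh : IsUnaryPoly S h) (hfα : ¬ Collapses f β α)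
    (hhα : ¬ Collapses h β α) :
    ∃ p q, IsPolyPair S T R p q ∧ ¬ Collapses (fun x => f (p (h x))) β α := by
  simp only [Collapses, not_forall] at hhα
  obtain ⟨x, y, hxy, hhxy⟩ := hhα
  obtain ⟨p, hp, hfp⟩ :=
    exists_isUnaryPoly_not_rel_of_prec hα hβ hab hf hfα (hh.map_rel hβ hxy) hhxy
  obtain ⟨q, hpq⟩ := hR.exists_isPolyPair_of_fst hp
  exact ⟨p, q, hpq, fun hcol => hfp (hcol x y hxy)⟩

end PolyPair

section Minimal

variable {S : Str σ A} {T : Str σ B} {R : Set (A × B)} {α β : A → A → Prop}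
  {γ δ : B → B → Prop} {f : A → A} {g : B → B}

def IsSndMinimal (S : Str σ A) (T : Str σ B) (R : Set (A × B)) (α β : A → A → Prop)
    (f : A → A) (g : B → B) : Prop :=
  ∀ f' g', IsPolyPair S T R f' g' → ¬ Collapses f' β α → Set.range f' ⊆ Set.range f →
    (Set.range g).ncard ≤ (Set.range g').ncard

theorem minSet_range_snd_of_isSndMinimal [Finite B] (hR : SubdirectProd S T R)
    (hα : IsCongruence S α) (hβ : IsCongruence S β) (hab : Prec S α β)
    (h1 : ¬ SeparatesPair S T R α β γ δ) (h2 : ¬ SeparatesPairRev S T R γ δ α β)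
    (hfg : IsPolyPair S T R f g) (hfα : ¬ Collapses f β α)
    (hmin : IsSndMinimal S T R α β f g) : MinSet T γ δ (Set.range g) := by
  refine ⟨⟨g, hfg.snd, fun hgγ => h1 ⟨f, g, hfg, hfα, hgγ⟩, rfl⟩, ?_⟩
  rintro V ⟨k, hk, hkγ, rfl⟩ hV
  obtain ⟨h, hhk⟩ := hR.exists_isPolyPair_of_snd hk
  have hhα : ¬ Collapses h β α := fun hhα => h2 ⟨h, k, hhk, hkγ, hhα⟩
  obtain ⟨p, q, hpq, hnc⟩ :=
    hR.exists_isPolyPair_not_collapses_comp hα hβ hab hfg.fst hhk.fst hfα hhα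
  have hcard := hmin _ _ (hfg.comp (hpq.comp hhk)) hnc (Set.range_comp_subset_range _ f)
  refine Set.eq_of_subset_of_ncard_le hV (hcard.trans ?_) (Set.toFinite _)
  rw [show (fun y => g (q (k y))) = (fun z => g (q z)) ∘ k from rfl, Set.range_comp]
  exact Set.ncard_image_le (Set.toFinite _)

theorem exists_idempotent_isPolyPair_of_isSndMinimal [Finite A] [Finite B]
    (hR : SubdirectProd S T R) (hα : IsCongruence S α) (hβ : IsCongruence S β)
    (hab : Prec S α β) (hfg : IsPolyPair S T R f g) (hfα : ¬ Collapses f β α)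
    (hU : MinSet S α β (Set.range f)) (hmin : IsSndMinimal S T R α β f g) :
    ∃ e e', IsPolyPair S T R e e' ∧ (∀ x, e (e x) = e x) ∧ (∀ y, e' (e' y) = e' y) ∧
      Set.range e = Set.range f ∧ Set.range e' = Set.range g := by
  obtain ⟨p, q, hpq, hnc⟩ :=
    hR.exists_isPolyPair_not_collapses_comp hα hβ hab hfg.fst hfg.fst hfα hfα
  have hφψ := hfg.comp hpq
  have hF : Set.range (fun x => f (p (f x))) = Set.range f :=
    hU.2 _ ⟨_, (hφψ.comp hfg).fst, hnc, rfl⟩ (Set.range_comp_subset_range _ f)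
  have hG : Set.range (fun y => g (q (g y))) = Set.range g :=
    Set.eq_of_subset_of_ncard_le (Set.range_comp_subset_range _ g)
      (hmin _ _ (hφψ.comp hfg) hnc hF.subset) (Set.toFinite _)
  have : Finite (Function.End A) := inferInstanceAs (Finite (A → A))
  have : Finite (Function.End B) := inferInstanceAs (Finite (B → B))
  obtain ⟨n, hn, hidem⟩ := exists_isIdempotentElem_pow (M := Function.End A × Function.End B)
    (fun x => f (p x), fun y => g (q y))
  obtain ⟨n, rfl⟩ := Nat.exists_eq_succ_of_ne_zero hn
  exact ⟨_, _, hφψ.iterate (n + 1), congr_fun (congr_arg Prod.fst hidem),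
    congr_fun (congr_arg Prod.snd hidem),
    Function.range_iterate_succ_of_range_comp (Set.range_comp_subset_range _ f) hF n,
    Function.range_iterate_succ_of_range_comp (Set.range_comp_subset_range _ g) hG n⟩

end Minimal

end UAlg

open UAlg

theorem stmt8_general {σ : Sig} {A B : Type} [Finite A] [Finite B]
    (S : Str σ A) (T : Str σ B) (R : Set (A × B)) (hR : SubdirectProd S T R)
    (α β : A → A → Prop) (γ δ : B → B → Prop)
    (hα : IsCongruence S α) (hβ : IsCongruence S β)
    (hab : Prec S α β)
    (h1 : ¬ SeparatesPair S T R α β γ δ) (h2 : ¬ SeparatesPairRev S T R γ δ α β) :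
    ∀ U : Set A, MinSet S α β U →
      ∃ f g, IsPolyPair S T R f g ∧ (∀ x, f (f x) = f x) ∧ (∀ y, g (g y) = g y) ∧
        Set.range f = U ∧ MinSet T γ δ (Set.range g) := by
  intro U hU
  let candidates : Set ((A → A) × (B → B)) := {fg | IsPolyPair S T R fg.1 fg.2 ∧
    ¬ Collapses fg.1 β α ∧ Set.range fg.1 ⊆ U}
  have hne : candidates.Nonempty := by
    obtain ⟨f₀, hf₀, hf₀α, rfl⟩ := hU.1
    obtain ⟨g₀, hfg₀⟩ := hR.exists_isPolyPair_of_fst hf₀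
    exact ⟨(f₀, g₀), hfg₀, hf₀α, subset_rfl⟩
  obtain ⟨⟨f, g⟩, ⟨hfg, hfα, hfU⟩, hmin⟩ :=
    Set.exists_min_image candidates (fun fg => (Set.range fg.2).ncard) (Set.toFinite _) hne
  have hrange : Set.range f = U := hU.2 _ ⟨f, hfg.fst, hfα, rfl⟩ hfU
  subst hrange
  have hmin' : IsSndMinimal S T R α β f g := fun f' g' hfg' hf'α hf'U =>
    hmin (f', g') ⟨hfg', hf'α, hf'U⟩
  obtain ⟨e, e', hee', he, he', hrange, hrange'⟩ :=
    exists_idempotent_isPolyPair_of_isSndMinimal hR hα hβ hab hfg hfα hU hmin'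
  exact ⟨e, e', hee', he, he', hrange, hrange' ▸
    minSet_range_snd_of_isSndMinimal hR hα hβ hab h1 h2 hfg hfα hmin'⟩

/-- for inseparable intervals across a subdirect product, any
(α,β)-minimal set U is the A-image of an idempotent polynomial whose B-image
is a (γ,δ)-minimal set. -/
theorem stmt8 {σ : Sig} {A B : Type} [Finite A] [Finite B]
    (S : Str σ A) (T : Str σ B) (R : Set (A × B)) (hR : SubdirectProd S T R)
    (α β : A → A → Prop) (γ δ : B → B → Prop)
    (hα : IsCongruence S α) (hβ : IsCongruence S β)
    (hγ : IsCongruence T γ) (hδ : IsCongruence T δ)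
    (hab : Prec S α β) (hgd : Prec T γ δ)
    (h1 : ¬ SeparatesPair S T R α β γ δ) (h2 : ¬ SeparatesPairRev S T R γ δ α β) :
    ∀ U : Set A, MinSet S α β U →
      ∃ f g, IsPolyPair S T R f g ∧ (∀ x, f (f x) = f x) ∧ (∀ y, g (g y) = g y) ∧
        Set.range f = U ∧ MinSet T γ δ (Set.range g) :=
  stmt8_general S T R hR α β γ δ hα hβ hab h1 h2
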